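/- arXiv:2410.00903 — 5 statements merged into one kernel-verified Lean document; each statement's English description precedes it below -/
import Mathlib

section
/- (Theorem 1, identification by adjusting for a deconfounder of the internal representation.) Let R : Ω → ℛ be a random variable with countable value space ℛ (the internal representation), and let f_T : ℛ → {0,1} and f_U : ℛ → 𝒰 be functions with T = f_T ∘ R and U = f_U ∘ R (deterministic decoding). Let f : ℛ → 𝒬 be a deconfounder that determines the confounding features, i.e. f_U = g ∘ f for some function g : 𝒬 → 𝒰. For each (t,u) ∈ {0,1} × 𝒰 let Y_{t,u} : Ω → 𝒴 (𝒴 countable) be a potential outcome independent of R, and let Y = Y_{T,U} (consistency). Assume positivity for the deconfounder: P(T = t, f(R) = q) > 0 for every t ∈ {0,1} and every q with P(f(R) = q) > 0. Then for every t ∈ {0,1} and y ∈ 𝒴: P(Y_{t,U} = y) = Σ_{r : P(R = r) > 0} P(Y = y ∣ T = t, f(R) = f(r)) · P(R = r), where Y_{t,U} denotes the random variable ω ↦ Y_{t,U(ω)}(ω). -/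
open MeasureTheory

/-- Conditional probability `P(A ∣ B) = P(A ∩ B) / P(B)`. -/
noncomputable def cprob {Ω : Type*} [MeasurableSpace Ω] (μ : Measure Ω) (A B : Set Ω) :
    ENNReal :=
  μ (A ∩ B) / μ B

/-!
Condition on the value `r` of `R`. On `{R = r}` the confounder is `f_U r`, so the law of total
probability and the independence of the potential outcomes from `R` give
`P(Y_{t,U} = y) = ∑_r P(Y_{t, f_U r} = y) P(R = r)`. For `r` of positive mass,
`B = {T = t, f(R) = f(r)}` is a union of fibres of `R`, has positive probability by positivity,
and on `B` consistency and `f_U = g ∘ f` give `Y = Y_{t, f_U r}`; as this potential outcome is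
independent of `B`, `P(Y = y ∣ B) = P(Y_{t, f_U r} = y)`.
-/

section DiscreteRandomVariable

variable {Ω ι : Type*} [MeasurableSpace Ω] {μ : Measure Ω} [Countable ι] {R : Ω → ι}

theorem measurableSet_preimage_of_measurableSet_fiber
    (hR : ∀ r, MeasurableSet (R ⁻¹' {r})) (S : Set ι) : MeasurableSet (R ⁻¹' S) := by
  rw [← Set.biUnion_preimage_singleton]
  exact .biUnion S.to_countable fun r _ ↦ hR r

theorem measure_inter_preimage_eq_tsum (hR : ∀ r, MeasurableSet (R ⁻¹' {r})) (A : Set Ω)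
    (S : Set ι) : μ (A ∩ R ⁻¹' S) = ∑' r : S, μ (A ∩ R ⁻¹' {r.1}) := by
  rw [Set.inter_comm, ← Measure.restrict_apply (measurableSet_preimage_of_measurableSet_fiber hR S),
    ← tsum_measure_preimage_singleton S.to_countable fun r _ ↦ hR r]
  exact tsum_congr fun r ↦ by rw [Measure.restrict_apply (hR r), Set.inter_comm]

theorem measure_eq_tsum_inter_fiber (hR : ∀ r, MeasurableSet (R ⁻¹' {r})) (E : Set Ω) :
    μ E = ∑' r, μ (E ∩ R ⁻¹' {r}) := by
  rw [← tsum_univ, ← measure_inter_preimage_eq_tsum hR, Set.preimage_univ, Set.inter_univ]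

theorem measure_inter_preimage_eq_mul_of_forall_fiber (hR : ∀ r, MeasurableSet (R ⁻¹' {r}))
    {A : Set Ω} (hA : ∀ r, μ (A ∩ R ⁻¹' {r}) = μ A * μ (R ⁻¹' {r})) (S : Set ι) :
    μ (A ∩ R ⁻¹' S) = μ A * μ (R ⁻¹' S) := by
  have hS := measure_inter_preimage_eq_tsum (μ := μ) hR Set.univ S
  simp only [Set.univ_inter] at hS
  rw [measure_inter_preimage_eq_tsum hR, hS, ← ENNReal.tsum_mul_left]
  exact tsum_congr fun r ↦ hA r

theorem cprob_preimage_eq_of_forall_fiber [IsFiniteMeasure μ]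
    (hR : ∀ r, MeasurableSet (R ⁻¹' {r})) {A A' : Set Ω} {S : Set ι}
    (hAA' : A ∩ R ⁻¹' S = A' ∩ R ⁻¹' S) (hA' : ∀ r, μ (A' ∩ R ⁻¹' {r}) = μ A' * μ (R ⁻¹' {r}))
    (hS : μ (R ⁻¹' S) ≠ 0) : cprob μ A (R ⁻¹' S) = μ A' := by
  rw [cprob, hAA', measure_inter_preimage_eq_mul_of_forall_fiber hR hA',
    ENNReal.mul_div_cancel_right hS (measure_ne_top μ _)]

end DiscreteRandomVariable

theorem identification_by_deconfounder_general
    {Ω ℛ 𝒰 𝒬 𝒴 : Type*} [MeasurableSpace Ω] (μ : Measure Ω) [IsProbabilityMeasure μ]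
    [Countable ℛ]
    (R : Ω → ℛ) (fT : ℛ → Bool) (fU : ℛ → 𝒰) (f : ℛ → 𝒬) (g : 𝒬 → 𝒰)
    (T : Ω → Bool) (U : Ω → 𝒰)
    (Ypo : Bool → 𝒰 → Ω → 𝒴) (Y : Ω → 𝒴)
    (hTdef : ∀ ω, T ω = fT (R ω)) (hUdef : ∀ ω, U ω = fU (R ω))
    (hdecon : ∀ r : ℛ, fU r = g (f r))
    (hYdef : ∀ ω, Y ω = Ypo (T ω) (U ω) ω)
    (hR : ∀ r : ℛ, MeasurableSet {ω | R ω = r})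
    (hindep : ∀ (t : Bool) (u : 𝒰) (y : 𝒴) (r : ℛ),
      μ ({ω | Ypo t u ω = y} ∩ {ω | R ω = r})
        = μ {ω | Ypo t u ω = y} * μ {ω | R ω = r})
    (hpos : ∀ (t : Bool) (q : 𝒬), 0 < μ {ω | f (R ω) = q} →
      0 < μ ({ω | T ω = t} ∩ {ω | f (R ω) = q})) :
    ∀ (t : Bool) (y : 𝒴),
      μ {ω | Ypo t (U ω) ω = y}
        = ∑' r : {r : ℛ // 0 < μ {ω | R ω = r}},
            cprob μ {ω | Y ω = y} ({ω | T ω = t} ∩ {ω | f (R ω) = f r.1})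
              * μ {ω | R ω = r.1} := by
  obtain rfl : Y = fun ω ↦ Ypo (T ω) (U ω) ω := funext hYdef
  obtain rfl : T = fun ω ↦ fT (R ω) := funext hTdef
  obtain rfl : U = fun ω ↦ fU (R ω) := funext hUdef
  obtain rfl : fU = fun r ↦ g (f r) := funext hdecon
  intro t y
  have hcond (r : ℛ) (hr : 0 < μ (R ⁻¹' {r})) :
      cprob μ {ω | Ypo (fT (R ω)) (g (f (R ω))) ω = y} (R ⁻¹' {r' | fT r' = t ∧ f r' = f r})
        = μ {ω | Ypo t (g (f r)) ω = y} := by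
    refine cprob_preimage_eq_of_forall_fiber hR ?_ (hindep t _ y) (hpos t (f r) ?_).ne'
    · ext ω
      simp only [Set.mem_inter_iff, Set.mem_preimage, Set.mem_ofPred_eq]
      exact and_congr_left fun ⟨ht, hf⟩ ↦ by rw [ht, hf]
    · exact hr.trans_le (measure_mono fun ω (h : R ω = r) ↦ congrArg f h)
  calc μ {ω | Ypo t (g (f (R ω))) ω = y}
      = ∑' r, μ ({ω | Ypo t (g (f (R ω))) ω = y} ∩ R ⁻¹' {r}) := measure_eq_tsum_inter_fiber hR _
    _ = ∑' r, μ {ω | Ypo t (g (f r)) ω = y} * μ (R ⁻¹' {r}) := by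
        refine tsum_congr fun r ↦ (congrArg μ ?_).trans (hindep t _ y r)
        ext ω
        exact and_congr_left fun (h : R ω = r) ↦ by simp only [Set.mem_ofPred_eq, h]
    _ = ∑' r : {r : ℛ // 0 < μ (R ⁻¹' {r})}, μ {ω | Ypo t (g (f r)) ω = y} * μ (R ⁻¹' {r.1}) :=
        (tsum_subtype_eq_of_support_subset (s := {r | 0 < μ (R ⁻¹' {r})}) fun _ hr ↦
          pos_iff_ne_zero.mpr (right_ne_zero_of_mul (Function.mem_support.mp hr))).symm
    _ = _ := tsum_congr fun r ↦ by rw [← hcond r r.2]; rfl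

/-- Theorem 1 (identification by adjusting for a deconfounder of the internal
representation): with deterministic decoding `T = f_T ∘ R`, `U = f_U ∘ R`, a
deconfounder `f` determining the confounding features (`f_U = g ∘ f`), potential
outcomes independent of `R`, consistency, and positivity for the deconfounder,
`P(Y_{t,U} = y) = Σ_{r : P(R = r) > 0} P(Y = y ∣ T = t, f(R) = f(r)) · P(R = r)`. -/
theorem identification_by_deconfounder
    {Ω ℛ 𝒰 𝒬 𝒴 : Type*} [MeasurableSpace Ω] (μ : Measure Ω) [IsProbabilityMeasure μ]
    [Countable ℛ] [Countable 𝒰] [Countable 𝒬] [Countable 𝒴]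
    (R : Ω → ℛ) (fT : ℛ → Bool) (fU : ℛ → 𝒰) (f : ℛ → 𝒬) (g : 𝒬 → 𝒰)
    (T : Ω → Bool) (U : Ω → 𝒰)
    (Ypo : Bool → 𝒰 → Ω → 𝒴) (Y : Ω → 𝒴)
    (hTdef : ∀ ω, T ω = fT (R ω)) (hUdef : ∀ ω, U ω = fU (R ω))
    (hdecon : ∀ r : ℛ, fU r = g (f r))
    (hYdef : ∀ ω, Y ω = Ypo (T ω) (U ω) ω)
    (hR : ∀ r : ℛ, MeasurableSet {ω | R ω = r})
    (hYpo : ∀ (t : Bool) (u : 𝒰) (y : 𝒴), MeasurableSet {ω | Ypo t u ω = y})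
    (hindep : ∀ (t : Bool) (u : 𝒰) (y : 𝒴) (r : ℛ),
      μ ({ω | Ypo t u ω = y} ∩ {ω | R ω = r})
        = μ {ω | Ypo t u ω = y} * μ {ω | R ω = r})
    (hpos : ∀ (t : Bool) (q : 𝒬), 0 < μ {ω | f (R ω) = q} →
      0 < μ ({ω | T ω = t} ∩ {ω | f (R ω) = q})) :
    ∀ (t : Bool) (y : 𝒴),
      μ {ω | Ypo t (U ω) ω = y}
        = ∑' r : {r : ℛ // 0 < μ {ω | R ω = r}},
            cprob μ {ω | Y ω = y} ({ω | T ω = t} ∩ {ω | f (R ω) = f r.1})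
              * μ {ω | R ω = r.1} :=
  identification_by_deconfounder_general μ R fT fU f g T U Ypo Y hTdef hUdef hdecon hYdef hR hindep
    hpos
end

section
/- (The confounding-feature map is a valid deconfounder.) Let R : Ω → ℛ be a random variable with countable value space ℛ, and let f_T : ℛ → {0,1} and f_U : ℛ → 𝒰 (𝒰 countable) be functions with T = f_T ∘ R and U = f_U ∘ R. For each (t,u) ∈ {0,1} × 𝒰 let Y_{t,u} : Ω → 𝒴 (𝒴 countable) be a potential outcome independent of R, and let Y = Y_{T,U} (consistency). Then Y is conditionally independent of R given (T, U): for every t ∈ {0,1}, u ∈ 𝒰 with P(T = t, U = u) > 0 and all y, r, P(Y = y, R = r ∣ T = t, U = u) = P(Y = y ∣ T = t, U = u)·P(R = r ∣ T = t, U = u). -/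
open MeasureTheory

/-- The confounding-feature map is a valid deconfounder: with `T = f_T ∘ R`,
`U = f_U ∘ R`, potential outcomes independent of `R`, and consistency `Y = Y_{T,U}`,
the observed outcome `Y` is conditionally independent of `R` given `(T, U)`. -/
theorem confounding_map_is_deconfounder
    {Ω ℛ 𝒰 𝒴 : Type*} [MeasurableSpace Ω] (μ : Measure Ω) [IsProbabilityMeasure μ]
    [Countable ℛ] [Countable 𝒰] [Countable 𝒴]
    (R : Ω → ℛ) (fT : ℛ → Bool) (fU : ℛ → 𝒰) (T : Ω → Bool) (U : Ω → 𝒰)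
    (Ypo : Bool → 𝒰 → Ω → 𝒴) (Y : Ω → 𝒴)
    (hTdef : ∀ ω, T ω = fT (R ω)) (hUdef : ∀ ω, U ω = fU (R ω))
    (hYdef : ∀ ω, Y ω = Ypo (T ω) (U ω) ω)
    (hR : ∀ r : ℛ, MeasurableSet {ω | R ω = r})
    (hYpo : ∀ (t : Bool) (u : 𝒰) (y : 𝒴), MeasurableSet {ω | Ypo t u ω = y})
    (hindep : ∀ (t : Bool) (u : 𝒰) (y : 𝒴) (r : ℛ),
      μ ({ω | Ypo t u ω = y} ∩ {ω | R ω = r})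
        = μ {ω | Ypo t u ω = y} * μ {ω | R ω = r}) :
    ∀ (t : Bool) (u : 𝒰), 0 < μ ({ω | T ω = t} ∩ {ω | U ω = u}) →
      ∀ (y : 𝒴) (r : ℛ),
        cprob μ ({ω | Y ω = y} ∩ {ω | R ω = r}) ({ω | T ω = t} ∩ {ω | U ω = u})
          = cprob μ {ω | Y ω = y} ({ω | T ω = t} ∩ {ω | U ω = u})
            * cprob μ {ω | R ω = r} ({ω | T ω = t} ∩ {ω | U ω = u}) := by
  intro t u hB y r
  set B : Set Ω := {ω | T ω = t} ∩ {ω | U ω = u} with hBdef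
  have hBne : μ B ≠ 0 := ne_of_gt hB
  have hBtop : μ B ≠ ⊤ := measure_ne_top μ B
  set S : Set ℛ := {r' : ℛ | fT r' = t ∧ fU r' = u} with hSdef
  have hBeq : B = ⋃ r' ∈ S, {ω | R ω = r'} := by
    ext ω
    simp only [hBdef, hSdef, Set.mem_inter_iff, Set.mem_setOf_eq, Set.mem_iUnion,
      hTdef, hUdef]
    constructor
    · rintro ⟨h1, h2⟩; exact ⟨R ω, ⟨h1, h2⟩, rfl⟩
    · rintro ⟨r', ⟨h1, h2⟩, h3⟩; rw [h3]; exact ⟨h1, h2⟩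
  -- key: independence extends to B
  have key : μ ({ω | Ypo t u ω = y} ∩ B) = μ {ω | Ypo t u ω = y} * μ B := by
    rw [hBeq, Set.inter_iUnion₂]
    have hdisj : S.PairwiseDisjoint fun r' => {ω | Ypo t u ω = y} ∩ {ω | R ω = r'} := by
      intro a _ b _ hab
      refine Set.disjoint_left.mpr ?_
      rintro ω ⟨_, ha⟩ ⟨_, hb⟩
      exact hab (ha.symm.trans hb)
    have hScount : S.Countable := Set.to_countable S
    rw [measure_biUnion hScount hdisj (fun r' _ => (hYpo t u y).inter (hR r'))]
    have : μ (⋃ r' ∈ S, {ω | R ω = r'}) = ∑' r' : S, μ {ω | R ω = (r' : ℛ)} := by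
      refine measure_biUnion hScount ?_ (fun r' _ => hR r')
      intro a _ b _ hab
      refine Set.disjoint_left.mpr ?_
      rintro ω ha hb
      exact hab (ha.symm.trans hb)
    rw [this, tsum_congr (fun p : S => hindep t u y p), ENNReal.tsum_mul_left]
  by_cases hr : fT r = t ∧ fU r = u
  · -- {R = r} ⊆ B
    have hsub : {ω | R ω = r} ⊆ B := by
      intro ω hω
      simp only [Set.mem_setOf_eq] at hω
      exact ⟨by simp [hTdef, hω, hr.1], by simp [hUdef, hω, hr.2]⟩
    have hRB : {ω | R ω = r} ∩ B = {ω | R ω = r} := Set.inter_eq_left.mpr hsub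
    have hYR : {ω | Y ω = y} ∩ {ω | R ω = r} = {ω | Ypo t u ω = y} ∩ {ω | R ω = r} := by
      ext ω
      simp only [Set.mem_inter_iff, Set.mem_setOf_eq]
      constructor
      · rintro ⟨h1, h2⟩
        refine ⟨?_, h2⟩
        rw [hYdef ω, hTdef ω, hUdef ω, h2, hr.1, hr.2] at h1
        exact h1
      · rintro ⟨h1, h2⟩
        refine ⟨?_, h2⟩
        rw [hYdef ω, hTdef ω, hUdef ω, h2, hr.1, hr.2]
        exact h1
    have hYB : {ω | Y ω = y} ∩ B = {ω | Ypo t u ω = y} ∩ B := by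
      ext ω
      simp only [hBdef, Set.mem_inter_iff, Set.mem_setOf_eq]
      constructor
      · rintro ⟨h1, h2, h3⟩
        refine ⟨?_, h2, h3⟩
        rw [hYdef ω, h2, h3] at h1
        exact h1
      · rintro ⟨h1, h2, h3⟩
        refine ⟨?_, h2, h3⟩
        rw [hYdef ω, h2, h3]
        exact h1
    unfold cprob
    rw [Set.inter_assoc, hRB, hYR, hindep t u y r, hYB, key, mul_div_assoc,
      mul_div_assoc, ENNReal.div_self hBne hBtop, mul_one]
  · -- incompatible r : both sides vanish
    have hRB : {ω | R ω = r} ∩ B = ∅ := by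
      ext ω
      simp only [hBdef, Set.mem_inter_iff, Set.mem_setOf_eq, Set.mem_empty_iff_false,
        iff_false, not_and, hTdef, hUdef]
      rintro h1 h2 h3
      exact hr ⟨h1 ▸ h2, h1 ▸ h3⟩
    unfold cprob
    rw [Set.inter_assoc, hRB, Set.inter_empty, measure_empty, ENNReal.zero_div, mul_zero]
end

section
/- (Reduced-form (numerator) identity in the LATE identification.) In the IV setup, for every u ∈ 𝒰 such that P(T = 1, U = u) > 0 and P(T = 0, U = u) > 0: E[Y ∣ T = 1, U = u] − E[Y ∣ T = 0, U = u] = E[(Y_{1,u} − Y_{0,u}) · 1{T̃_{1,u} = 1, T̃_{0,u} = 0}]. -/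
open MeasureTheory ProbabilityTheory

/-- Conditional expectation `E[Z ∣ B] = E[Z·1_B] / P(B)`. -/
noncomputable def cexp {Ω : Type*} [MeasurableSpace Ω] (μ : Measure Ω) (Z : Ω → ℝ)
    (B : Set Ω) : ℝ :=
  (∫ ω in B, Z ω ∂μ) / (μ B).toReal

/-! On the cell `{T = t, U = u}` the observed outcome is the realised potential outcome
`Y_{T̃_{t,u}, u}`, a function of the vector `(Y_{0,u}, Y_{1,u}, T̃_{0,u}, T̃_{1,u})`. By
unconfoundedness it is independent of `(T, U)`, so its average over the cell is its plain
expectation. The difference of the two expectations is `E[Y_{T̃_{1,u},u} - Y_{T̃_{0,u},u}]`, and by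
monotonicity the integrand vanishes except on compliers, where it is `Y_{1,u} - Y_{0,u}`. -/

@[fun_prop]
theorem Measurable.cond {α β : Type*} [MeasurableSpace α] [MeasurableSpace β]
    {b : α → Bool} {f g : α → β} (hb : Measurable b) (hf : Measurable f) (hg : Measurable g) :
    Measurable fun x => _root_.cond (b x) (f x) (g x) := by
  have h : (fun x => _root_.cond (b x) (f x) (g x)) = fun x => if b x = true then f x else g x := by
    funext x
    cases b x <;> rfl
  rw [h]
  exact hf.ite (hb (measurableSet_singleton true)) hg

theorem Bool.sub_eq_ite_of_le {β : Type*} [AddGroup β] (g : Bool → β) {a b : Bool} (hab : a ≤ b) :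
    g b - g a = if b = true ∧ a = false then g true - g false else 0 := by
  cases a <;> cases b <;> first | exact absurd hab (by decide) | simp

section Independence

variable {Ω γ : Type*} [MeasurableSpace Ω] [MeasurableSpace γ] {μ : Measure Ω}
  {f : Ω → ℝ} {Z : Ω → γ} {s : Set γ}

theorem ProbabilityTheory.IndepFun.setIntegral_preimage_eq_measureReal_mul_integral
    (h : IndepFun f Z μ) (hf : AEStronglyMeasurable f μ) (hZ : Measurable Z)
    (hs : MeasurableSet s) :
    ∫ ω in Z ⁻¹' s, f ω ∂μ = μ.real (Z ⁻¹' s) * ∫ ω, f ω ∂μ := by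
  have hind : IndepFun f (s.indicator (1 : γ → ℝ) ∘ Z) μ :=
    h.comp measurable_id (measurable_one.indicator hs)
  have hprod : (Z ⁻¹' s).indicator f = fun ω => f ω * (s.indicator 1 ∘ Z) ω := by
    funext ω
    by_cases hω : Z ω ∈ s <;> simp [Set.indicator, hω]
  rw [← integral_indicator (hZ hs), hprod,
    hind.integral_fun_mul_eq_mul_integral hf
      ((measurable_one.indicator hs).comp hZ).aestronglyMeasurable,
    mul_comm]
  exact congrArg (· * _) (integral_indicator_one (hZ hs))

theorem cexp_preimage_eq_integral_of_indepFun [IsFiniteMeasure μ] {Y : Ω → ℝ}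
    (h : IndepFun f Z μ) (hf : AEStronglyMeasurable f μ) (hZ : Measurable Z)
    (hs : MeasurableSet s) (hYf : Set.EqOn Y f (Z ⁻¹' s)) (hpos : μ (Z ⁻¹' s) ≠ 0) :
    cexp μ Y (Z ⁻¹' s) = ∫ ω, f ω ∂μ := by
  rw [cexp, setIntegral_congr_fun (hZ hs) hYf,
    h.setIntegral_preimage_eq_measureReal_mul_integral hf hZ hs, ← measureReal_def,
    mul_div_cancel_left₀ _ ((measureReal_ne_zero_iff).2 hpos)]

end Independence

section PotentialOutcomes

variable {Ω : Type*} [MeasurableSpace Ω] {μ : Measure Ω}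
  {Y : Bool → Ω → ℝ} {D : Bool → Ω → Bool}

theorem measurable_realizedOutcome (hY : ∀ d, Measurable (Y d)) (hD : ∀ t, Measurable (D t))
    (t : Bool) : Measurable fun ω => Y (D t ω) ω := by
  have h : (fun ω => Y (D t ω) ω) = fun ω => cond (D t ω) (Y true ω) (Y false ω) := by
    funext ω
    cases D t ω <;> rfl
  rw [h]
  exact (hD t).cond (hY true) (hY false)

theorem integrable_realizedOutcome [IsFiniteMeasure μ] (hY : ∀ d, Measurable (Y d))
    (hD : ∀ t, Measurable (D t)) {C : ℝ} (hC : ∀ d ω, |Y d ω| ≤ C) (t : Bool) :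
    Integrable (fun ω => Y (D t ω) ω) μ :=
  .of_bound (measurable_realizedOutcome hY hD t).aestronglyMeasurable C
    (.of_forall fun ω => hC (D t ω) ω)

theorem indepFun_realizedOutcome {γ : Type*} [MeasurableSpace γ] {Z : Ω → γ}
    (h : IndepFun (fun ω => (Y false ω, Y true ω, D false ω, D true ω)) Z μ) (t : Bool) :
    IndepFun (fun ω => Y (D t ω) ω) Z μ := by
  have hφ : Measurable fun p : ℝ × ℝ × Bool × Bool => cond (cond t p.2.2.2 p.2.2.1) p.2.1 p.1 :=
    by fun_prop
  convert h.comp hφ measurable_id using 1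
  · funext ω
    cases t <;> simp only [Function.comp_apply, Bool.cond_true, Bool.cond_false] <;>
      cases D _ ω <;> rfl
  · rfl

theorem integral_realizedOutcome_sub_eq_setIntegral_compliers
    (hint : ∀ t, Integrable (fun ω => Y (D t ω) ω) μ) (hD : ∀ t, Measurable (D t))
    (hmono : ∀ ω, D false ω ≤ D true ω) :
    (∫ ω, Y (D true ω) ω ∂μ) - ∫ ω, Y (D false ω) ω ∂μ
      = ∫ ω in {ω | D true ω = true ∧ D false ω = false}, (Y true ω - Y false ω) ∂μ := by
  have hS : MeasurableSet {ω | D true ω = true ∧ D false ω = false} :=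
    (hD true (measurableSet_singleton true)).inter (hD false (measurableSet_singleton false))
  rw [← integral_sub (hint true) (hint false), ← integral_indicator hS]
  congr 1
  funext ω
  rw [Set.indicator_apply]
  exact Bool.sub_eq_ite_of_le (fun d => Y d ω) (hmono ω)

end PotentialOutcomes

theorem reduced_form_identity_general
    {Ω 𝒰 : Type*} [MeasurableSpace Ω] (μ : Measure Ω) [IsProbabilityMeasure μ]
    [MeasurableSpace 𝒰] [MeasurableSingletonClass 𝒰]
    (T : Ω → Bool) (U : Ω → 𝒰)
    (Ttil : Bool → 𝒰 → Ω → Bool) (Ypo : Bool → 𝒰 → Ω → ℝ)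
    (Tperc : Ω → Bool) (Y : Ω → ℝ)
    (hT : Measurable T) (hU : Measurable U)
    (hTtil : ∀ (t : Bool) (u : 𝒰), Measurable (Ttil t u))
    (hYpo : ∀ (t : Bool) (u : 𝒰), Measurable (Ypo t u))
    (hbdd : ∃ C : ℝ, ∀ (t : Bool) (u : 𝒰) (ω : Ω), |Ypo t u ω| ≤ C)
    (hTperc : ∀ ω, Tperc ω = Ttil (T ω) (U ω) ω)
    (hYobs : ∀ ω, Y ω = Ypo (Tperc ω) (U ω) ω)
    (hunconf : ∀ u : 𝒰,
      IndepFun (fun ω => (Ypo false u ω, Ypo true u ω, Ttil false u ω, Ttil true u ω))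
        (fun ω => (T ω, U ω)) μ)
    (hmono : ∀ (u : 𝒰) (ω : Ω), Ttil false u ω ≤ Ttil true u ω) :
    ∀ u : 𝒰, 0 < μ ({ω | T ω = true} ∩ {ω | U ω = u}) →
      0 < μ ({ω | T ω = false} ∩ {ω | U ω = u}) →
      cexp μ Y ({ω | T ω = true} ∩ {ω | U ω = u})
          - cexp μ Y ({ω | T ω = false} ∩ {ω | U ω = u})
        = ∫ ω in {ω | Ttil true u ω = true ∧ Ttil false u ω = false},
            (Ypo true u ω - Ypo false u ω) ∂μ := by
  intro u hpos₁ hpos₀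
  obtain ⟨C, hC⟩ := hbdd
  have hcell : ∀ t, {ω | T ω = t} ∩ {ω | U ω = u} = (fun ω => (T ω, U ω)) ⁻¹' {(t, u)} := by
    intro t
    ext ω
    simp [Prod.ext_iff]
  have hcexp : ∀ t, 0 < μ ({ω | T ω = t} ∩ {ω | U ω = u}) →
      cexp μ Y ({ω | T ω = t} ∩ {ω | U ω = u}) = ∫ ω, Ypo (Ttil t u ω) u ω ∂μ := by
    intro t hpos
    rw [hcell] at hpos ⊢
    refine cexp_preimage_eq_integral_of_indepFun
      (indepFun_realizedOutcome (Y := (Ypo · u)) (D := (Ttil · u)) (hunconf u) t)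
      (measurable_realizedOutcome (hYpo · u) (hTtil · u) t).aestronglyMeasurable
      (hT.prodMk hU) (measurableSet_singleton _) ?_ hpos.ne'
    intro ω hω
    obtain ⟨hTω, hUω⟩ : T ω = t ∧ U ω = u := Prod.ext_iff.1 hω
    rw [hYobs, hTperc, hTω, hUω]
  rw [hcexp true hpos₁, hcexp false hpos₀]
  exact integral_realizedOutcome_sub_eq_setIntegral_compliers
    (integrable_realizedOutcome (hYpo · u) (hTtil · u) (hC · u)) (hTtil · u) (hmono u)

/-- Reduced-form (numerator) identity in the LATE identification: in the IV setup,
for every `u` with `P(T = 1, U = u) > 0` and `P(T = 0, U = u) > 0`,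
`E[Y ∣ T = 1, U = u] − E[Y ∣ T = 0, U = u]
  = E[(Y_{1,u} − Y_{0,u}) · 1{T̃_{1,u} = 1, T̃_{0,u} = 0}]`. -/
theorem reduced_form_identity
    {Ω 𝒰 : Type*} [MeasurableSpace Ω] (μ : Measure Ω) [IsProbabilityMeasure μ]
    [Countable 𝒰] [MeasurableSpace 𝒰] [MeasurableSingletonClass 𝒰]
    (T : Ω → Bool) (U : Ω → 𝒰)
    (Ttil : Bool → 𝒰 → Ω → Bool) (Ypo : Bool → 𝒰 → Ω → ℝ)
    (Tperc : Ω → Bool) (Y : Ω → ℝ)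
    (hT : Measurable T) (hU : Measurable U)
    (hTtil : ∀ (t : Bool) (u : 𝒰), Measurable (Ttil t u))
    (hYpo : ∀ (t : Bool) (u : 𝒰), Measurable (Ypo t u))
    (hbdd : ∃ C : ℝ, ∀ (t : Bool) (u : 𝒰) (ω : Ω), |Ypo t u ω| ≤ C)
    (hTperc : ∀ ω, Tperc ω = Ttil (T ω) (U ω) ω)
    (hYobs : ∀ ω, Y ω = Ypo (Tperc ω) (U ω) ω)
    (hunconf : ∀ u : 𝒰,
      IndepFun (fun ω => (Ypo false u ω, Ypo true u ω, Ttil false u ω, Ttil true u ω))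
        (fun ω => (T ω, U ω)) μ)
    (hmono : ∀ (u : 𝒰) (ω : Ω), Ttil false u ω ≤ Ttil true u ω) :
    ∀ u : 𝒰, 0 < μ ({ω | T ω = true} ∩ {ω | U ω = u}) →
      0 < μ ({ω | T ω = false} ∩ {ω | U ω = u}) →
      cexp μ Y ({ω | T ω = true} ∩ {ω | U ω = u})
          - cexp μ Y ({ω | T ω = false} ∩ {ω | U ω = u})
        = ∫ ω in {ω | Ttil true u ω = true ∧ Ttil false u ω = false},
            (Ypo true u ω - Ypo false u ω) ∂μ :=
  reduced_form_identity_general μ T U Ttil Ypo Tperc Y hT hU hTtil hYpo hbdd hTperc hYobs hunconf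
    hmono
end

section
/- (First-stage identity in the LATE identification.) In the IV setup, for every u ∈ 𝒰 such that P(T = 1, U = u) > 0 and P(T = 0, U = u) > 0: E[T̃ ∣ T = 1, U = u] − E[T̃ ∣ T = 0, U = u] = P(T̃_{1,u} = 1, T̃_{0,u} = 0), i.e. the first-stage difference equals the probability of being a complier at u. -/
open MeasureTheory ProbabilityTheory

section

variable {Ω : Type*} [MeasurableSpace Ω] {μ : Measure Ω}

lemma cexp_eq_measureReal_of_eqOn_indicator [IsFiniteMeasure μ] {A B : Set Ω} {Z : Ω → ℝ}
    (hA : MeasurableSet A) (hB : MeasurableSet B) (hindep : μ (A ∩ B) = μ A * μ B)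
    (hB0 : μ B ≠ 0) (hZ : Set.EqOn Z (A.indicator 1) B) :
    cexp μ Z B = μ.real A := by
  have hint : ∫ ω in B, Z ω ∂μ = μ.real A * μ.real B := by
    rw [setIntegral_congr_fun hB hZ, setIntegral_indicator hA, Pi.one_def, setIntegral_const,
      smul_eq_mul, mul_one, Set.inter_comm]
    simp only [measureReal_def, hindep, ENNReal.toReal_mul]
  have hB0' : μ.real B ≠ 0 := ENNReal.toReal_ne_zero.mpr ⟨hB0, measure_ne_top μ B⟩
  rw [cexp, hint, ← measureReal_def, mul_div_assoc, div_self hB0', mul_one]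

lemma indepFun_potentialTreatment {α β γ : Type*} [MeasurableSpace α] [MeasurableSpace β]
    [MeasurableSpace γ] {Y₀ Y₁ : Ω → α} {X : Bool → Ω → β} {V : Ω → γ}
    (h : IndepFun (fun ω => (Y₀ ω, Y₁ ω, X false ω, X true ω)) V μ) (t : Bool) :
    IndepFun (X t) V μ := by
  cases t
  · exact h.comp (φ := fun p => p.2.2.1) (by fun_prop) measurable_id
  · exact h.comp (φ := fun p => p.2.2.2) (by fun_prop) measurable_id

lemma measureReal_true_false_of_le [IsFiniteMeasure μ] {a b : Ω → Bool}
    (hle : ∀ ω, a ω ≤ b ω) (ha : MeasurableSet {ω | a ω = true}) :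
    μ.real {ω | b ω = true ∧ a ω = false}
      = μ.real {ω | b ω = true} - μ.real {ω | a ω = true} := by
  have hsub : {ω | a ω = true} ⊆ {ω | b ω = true} := fun ω h =>
    Bool.eq_true_of_true_le (h ▸ hle ω)
  rw [← measureReal_sdiff hsub ha]
  congr 1
  ext ω
  simp

end

lemma cexp_perceivedTreatment_eq_measureReal {Ω 𝒰 : Type*} [MeasurableSpace Ω]
    {μ : Measure Ω} [IsFiniteMeasure μ] [MeasurableSpace 𝒰] [MeasurableSingletonClass 𝒰]
    {T : Ω → Bool} {U : Ω → 𝒰} {Ttil : Bool → 𝒰 → Ω → Bool} {Tperc : Ω → Bool}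
    {t : Bool} {u : 𝒰} (hT : Measurable T) (hU : Measurable U)
    (hTtil : Measurable (Ttil t u)) (hTperc : ∀ ω, Tperc ω = Ttil (T ω) (U ω) ω)
    (hindep : IndepFun (Ttil t u) (fun ω => (T ω, U ω)) μ)
    (hpos : 0 < μ ({ω | T ω = t} ∩ {ω | U ω = u})) :
    cexp μ (fun ω => if Tperc ω = true then (1 : ℝ) else 0)
        ({ω | T ω = t} ∩ {ω | U ω = u}) = μ.real {ω | Ttil t u ω = true} := by
  have hcell : (fun ω => (T ω, U ω)) ⁻¹' {(t, u)} = {ω | T ω = t} ∩ {ω | U ω = u} := by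
    ext ω
    simp
  refine cexp_eq_measureReal_of_eqOn_indicator (hTtil (measurableSet_singleton true))
    ((hT (measurableSet_singleton t)).inter (hU (measurableSet_singleton u))) ?_ hpos.ne' ?_
  · rw [← hcell]
    exact hindep.measure_inter_preimage_eq_mul {true} {(t, u)} (measurableSet_singleton _)
      (measurableSet_singleton _)
  · rintro ω ⟨rfl, rfl⟩
    simp [Set.indicator, hTperc]

theorem first_stage_identity_general
    {Ω 𝒰 : Type*} [MeasurableSpace Ω] (μ : Measure Ω) [IsProbabilityMeasure μ]
    [MeasurableSpace 𝒰] [MeasurableSingletonClass 𝒰]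
    (T : Ω → Bool) (U : Ω → 𝒰)
    (Ttil : Bool → 𝒰 → Ω → Bool) (Ypo : Bool → 𝒰 → Ω → ℝ)
    (Tperc : Ω → Bool)
    (hT : Measurable T) (hU : Measurable U)
    (hTtil : ∀ (t : Bool) (u : 𝒰), Measurable (Ttil t u))
    (hTperc : ∀ ω, Tperc ω = Ttil (T ω) (U ω) ω)
    (hunconf : ∀ u : 𝒰,
      IndepFun (fun ω => (Ypo false u ω, Ypo true u ω, Ttil false u ω, Ttil true u ω))
        (fun ω => (T ω, U ω)) μ)
    (hmono : ∀ (u : 𝒰) (ω : Ω), Ttil false u ω ≤ Ttil true u ω) :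
    ∀ u : 𝒰, 0 < μ ({ω | T ω = true} ∩ {ω | U ω = u}) →
      0 < μ ({ω | T ω = false} ∩ {ω | U ω = u}) →
      cexp μ (fun ω => if Tperc ω = true then (1 : ℝ) else 0)
          ({ω | T ω = true} ∩ {ω | U ω = u})
        - cexp μ (fun ω => if Tperc ω = true then (1 : ℝ) else 0)
            ({ω | T ω = false} ∩ {ω | U ω = u})
        = (μ {ω | Ttil true u ω = true ∧ Ttil false u ω = false}).toReal := by
  intro u h₁ h₀
  have hindep := indepFun_potentialTreatment (X := (Ttil · u)) (hunconf u)
  rw [cexp_perceivedTreatment_eq_measureReal hT hU (hTtil true u) hTperc (hindep true) h₁,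
    cexp_perceivedTreatment_eq_measureReal hT hU (hTtil false u) hTperc (hindep false) h₀]
  exact (measureReal_true_false_of_le (hmono u)
    (hTtil false u (measurableSet_singleton true))).symm

/-- First-stage identity in the LATE identification: in the IV setup, for every `u`
with `P(T = 1, U = u) > 0` and `P(T = 0, U = u) > 0`,
`E[T̃ ∣ T = 1, U = u] − E[T̃ ∣ T = 0, U = u] = P(T̃_{1,u} = 1, T̃_{0,u} = 0)`. -/
theorem first_stage_identity
    {Ω 𝒰 : Type*} [MeasurableSpace Ω] (μ : Measure Ω) [IsProbabilityMeasure μ]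
    [Countable 𝒰] [MeasurableSpace 𝒰] [MeasurableSingletonClass 𝒰]
    (T : Ω → Bool) (U : Ω → 𝒰)
    (Ttil : Bool → 𝒰 → Ω → Bool) (Ypo : Bool → 𝒰 → Ω → ℝ)
    (Tperc : Ω → Bool) (Y : Ω → ℝ)
    (hT : Measurable T) (hU : Measurable U)
    (hTtil : ∀ (t : Bool) (u : 𝒰), Measurable (Ttil t u))
    (hYpo : ∀ (t : Bool) (u : 𝒰), Measurable (Ypo t u))
    (hbdd : ∃ C : ℝ, ∀ (t : Bool) (u : 𝒰) (ω : Ω), |Ypo t u ω| ≤ C)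
    (hTperc : ∀ ω, Tperc ω = Ttil (T ω) (U ω) ω)
    (hYobs : ∀ ω, Y ω = Ypo (Tperc ω) (U ω) ω)
    (hunconf : ∀ u : 𝒰,
      IndepFun (fun ω => (Ypo false u ω, Ypo true u ω, Ttil false u ω, Ttil true u ω))
        (fun ω => (T ω, U ω)) μ)
    (hmono : ∀ (u : 𝒰) (ω : Ω), Ttil false u ω ≤ Ttil true u ω) :
    ∀ u : 𝒰, 0 < μ ({ω | T ω = true} ∩ {ω | U ω = u}) →
      0 < μ ({ω | T ω = false} ∩ {ω | U ω = u}) →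
      cexp μ (fun ω => if Tperc ω = true then (1 : ℝ) else 0)
          ({ω | T ω = true} ∩ {ω | U ω = u})
        - cexp μ (fun ω => if Tperc ω = true then (1 : ℝ) else 0)
            ({ω | T ω = false} ∩ {ω | U ω = u})
        = (μ {ω | Ttil true u ω = true ∧ Ttil false u ω = false}).toReal :=
  first_stage_identity_general μ T U Ttil Ypo Tperc hT hU hTtil hTperc hunconf hmono
end

section
/- (Theorem 3, nonparametric identification of the local average treatment effect.) In the IV setup with 𝒰 finite, assume positivity (P(T = t, U = u) > 0 for every t ∈ {0,1} and every u with P(U = u) > 0) and strict relevance at every point of the support (P(T̃_{1,u} = 1) > P(T̃_{0,u} = 1) for every u with P(U = u) > 0). Define Y_{t̃,U}(ω) := Y_{t̃,U(ω)}(ω) and T̃_{t,U}(ω) := T̃_{t,U(ω)}(ω). Then P(T̃_{1,U} = 1, T̃_{0,U} = 0) > 0, the denominator below is positive, and the local average treatment effect among compliers is identified as: E[Y_{1,U} − Y_{0,U} ∣ T̃_{1,U} = 1, T̃_{0,U} = 0] = ( Σ_{u : P(U=u)>0} (E[Y ∣ T = 1, U = u] − E[Y ∣ T = 0, U = u])·P(U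 = u) ) / ( Σ_{u : P(U=u)>0} (E[T̃ ∣ T = 1, U = u] − E[T̃ ∣ T = 0, U = u])·P(U = u) ). -/
/-!
Unconfoundedness makes the potential variables at `u` independent of the event `{T = t, U = u}`,
so `E[Y ∣ T = t, U = u] = E[Y_{T̃_{t,u}, u}]`. By monotonicity, `Y_{T̃_{1,u}, u} - Y_{T̃_{0,u}, u}`
is `Y_{1,u} - Y_{0,u}` on the compliers at `u` and `0` elsewhere; using independence from `U` once more and summing over the support of `U`, the weighted
reduced-form differences add up to `E[(Y_{1,U} - Y_{0,U}) 1_{compliers}]`. The first stage is the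
same computation for the outcome `t̃ ↦ t̃`, which yields `P(compliers)`; this is positive because
strict relevance at a point `u` of the support forces compliers at `u`.
-/

open MeasureTheory ProbabilityTheory

section Independence

variable {Ω β : Type*} [MeasurableSpace Ω] [MeasurableSpace β] {μ : Measure Ω}
  {X : Ω → ℝ} {W : Ω → β} {S : Set β}

theorem ProbabilityTheory.IndepFun.setIntegral_preimage_eq_mul (h : IndepFun X W μ)
    (hX : AEStronglyMeasurable X μ) (hW : Measurable W) (hS : MeasurableSet S) :
    ∫ ω in W ⁻¹' S, X ω ∂μ = (∫ ω, X ω ∂μ) * μ.real (W ⁻¹' S) := by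
  have hind : IndepFun X (fun ω => S.indicator (1 : β → ℝ) (W ω)) μ :=
    h.comp measurable_id (measurable_one.indicator hS)
  calc ∫ ω in W ⁻¹' S, X ω ∂μ = ∫ ω, X ω * S.indicator 1 (W ω) ∂μ := by
        rw [← integral_indicator (hW hS)]
        congr 1 with ω
        by_cases hω : W ω ∈ S <;> simp [hω]
    _ = (∫ ω, X ω ∂μ) * ∫ ω, (W ⁻¹' S).indicator 1 ω ∂μ :=
        hind.integral_fun_mul_eq_mul_integral hX
          ((measurable_one.indicator hS).comp hW).aestronglyMeasurable
    _ = (∫ ω, X ω ∂μ) * μ.real (W ⁻¹' S) := by rw [integral_indicator_one (hW hS)]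

theorem cexp_preimage_eq_integral_of_indepFun_s10 [IsFiniteMeasure μ] (h : IndepFun X W μ)
    (hX : AEStronglyMeasurable X μ) (hW : Measurable W) (hS : MeasurableSet S)
    (hpos : μ (W ⁻¹' S) ≠ 0) :
    cexp μ X (W ⁻¹' S) = ∫ ω, X ω ∂μ := by
  rw [cexp, h.setIntegral_preimage_eq_mul hX hW hS, measureReal_def,
    mul_div_cancel_right₀ _ (ENNReal.toReal_ne_zero.2 ⟨hpos, measure_ne_top μ _⟩)]

end Independence

theorem measurable_apply_index {Ω ι β : Type*} [MeasurableSpace Ω] [MeasurableSpace ι]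
    [MeasurableSpace β] [Countable ι] [MeasurableSingletonClass ι] {i : Ω → ι}
    {g : ι → Ω → β} (hi : Measurable i) (hg : ∀ j, Measurable (g j)) :
    Measurable fun ω => g (i ω) ω :=
  (measurable_from_prod_countable_left (f := fun p : Ω × ι => g p.2 p.1) hg).comp
    (measurable_id.prodMk hi)

theorem Set.iUnion_preimage_singleton_eq_univ {α β : Type*} (f : α → β) :
    ⋃ b, f ⁻¹' {b} = Set.univ :=
  Set.iUnion_eq_univ_iff.2 fun a => ⟨f a, rfl⟩

theorem measure_setOf_and_eq_false_pos {Ω : Type*} [MeasurableSpace Ω] {μ : Measure Ω}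
    {a b : Ω → Bool} (h : μ {ω | a ω = true} < μ {ω | b ω = true}) :
    0 < μ {ω | b ω = true ∧ a ω = false} := by
  refine pos_iff_ne_zero.2 fun h0 => h.not_ge ?_
  calc μ {ω | b ω = true}
      ≤ μ ({ω | a ω = true} ∪ {ω | b ω = true ∧ a ω = false}) :=
        measure_mono fun ω hb => by cases ha : a ω <;> simp_all
    _ ≤ μ {ω | a ω = true} + μ {ω | b ω = true ∧ a ω = false} := measure_union_le _ _
    _ = μ {ω | a ω = true} := by rw [h0, add_zero]

namespace IV

-- `(Y_{0,u}, Y_{1,u}, T̃_{0,u}, T̃_{1,u})`, in the order of the unconfoundedness hypothesis.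
def potentials {Ω 𝒰 : Type*} (Ttil : Bool → 𝒰 → Ω → Bool) (Ypo : Bool → 𝒰 → Ω → ℝ)
    (u : 𝒰) (ω : Ω) : ℝ × ℝ × Bool × Bool :=
  (Ypo false u ω, Ypo true u ω, Ttil false u ω, Ttil true u ω)

def realized (t : Bool) (p : ℝ × ℝ × Bool × Bool) : ℝ :=
  if (bif t then p.2.2.2 else p.2.2.1) = true then p.2.1 else p.1

def complierEffect (p : ℝ × ℝ × Bool × Bool) : ℝ :=
  if p.2.2.2 = true ∧ p.2.2.1 = false then p.2.1 - p.1 else 0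

theorem measurable_realized (t : Bool) : Measurable (realized t) :=
  Measurable.ite (measurableSet_setOfPred.2 (by cases t <;> fun_prop)) (by fun_prop) (by fun_prop)

theorem measurable_complierEffect : Measurable complierEffect :=
  Measurable.ite (measurableSet_setOfPred.2 (by fun_prop)) (by fun_prop) measurable_const

theorem realized_sub_realized {p : ℝ × ℝ × Bool × Bool} (h : p.2.2.1 ≤ p.2.2.2) :
    realized true p - realized false p = complierEffect p := by
  obtain ⟨y₀, y₁, a, b⟩ := p
  cases a <;> cases b <;> simp_all [realized, complierEffect, Bool.le_iff_imp]

theorem realized_potentials {Ω 𝒰 : Type*} {Ttil : Bool → 𝒰 → Ω → Bool} {Ypo : Bool → 𝒰 → Ω → ℝ}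
    (t : Bool) (u : 𝒰) (ω : Ω) :
    realized t (potentials Ttil Ypo u ω) = Ypo (Ttil t u ω) u ω := by
  cases t <;> cases h : Ttil _ u ω <;> simp [realized, potentials, h]

section Setup

variable {Ω 𝒰 : Type*} [MeasurableSpace Ω] {μ : Measure Ω}
  {T : Ω → Bool} {U : Ω → 𝒰} {Ttil : Bool → 𝒰 → Ω → Bool} {Ypo : Bool → 𝒰 → Ω → ℝ} {C : ℝ}

theorem measurable_potentials (hTtil : ∀ t u, Measurable (Ttil t u))
    (hYpo : ∀ t u, Measurable (Ypo t u)) (u : 𝒰) : Measurable (potentials Ttil Ypo u) :=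
  (hYpo false u).prodMk ((hYpo true u).prodMk ((hTtil false u).prodMk (hTtil true u)))

theorem integrable_realized_potentials [IsFiniteMeasure μ]
    (hTtil : ∀ t u, Measurable (Ttil t u)) (hYpo : ∀ t u, Measurable (Ypo t u))
    (hC : ∀ t u ω, |Ypo t u ω| ≤ C) (t : Bool) (u : 𝒰) :
    Integrable (fun ω => realized t (potentials Ttil Ypo u ω)) μ :=
  Integrable.of_bound
    ((measurable_realized t).comp (measurable_potentials hTtil hYpo u)).aestronglyMeasurable C
    (ae_of_all _ fun ω => by simpa [realized_potentials] using hC _ u ω)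

theorem cexp_observed_eq_integral_realized [IsFiniteMeasure μ] [MeasurableSpace 𝒰]
    [MeasurableSingletonClass 𝒰]
    (hT : Measurable T) (hU : Measurable U)
    (hTtil : ∀ t u, Measurable (Ttil t u)) (hYpo : ∀ t u, Measurable (Ypo t u))
    (hC : ∀ t u ω, |Ypo t u ω| ≤ C)
    (hunconf : ∀ u, IndepFun (potentials Ttil Ypo u) (fun ω => (T ω, U ω)) μ)
    {t : Bool} {u : 𝒰} (hpos : 0 < μ ({ω | T ω = t} ∩ {ω | U ω = u})) :
    cexp μ (fun ω => Ypo (Ttil (T ω) (U ω) ω) (U ω) ω) ({ω | T ω = t} ∩ {ω | U ω = u})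
      = ∫ ω, realized t (potentials Ttil Ypo u ω) ∂μ := by
  have hB : {ω | T ω = t} ∩ {ω | U ω = u} = (fun ω => (T ω, U ω)) ⁻¹' ({t} ×ˢ {u}) :=
    (Set.mk_preimage_prod (s := {t}) (t := {u}) T U).symm
  have hBm : MeasurableSet ((fun ω => (T ω, U ω)) ⁻¹' ({t} ×ˢ {u})) :=
    (hT.prodMk hU) ((measurableSet_singleton t).prod (measurableSet_singleton u))
  rw [hB] at hpos ⊢
  calc cexp μ (fun ω => Ypo (Ttil (T ω) (U ω) ω) (U ω) ω) _
      = cexp μ (fun ω => realized t (potentials Ttil Ypo u ω))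
          ((fun ω => (T ω, U ω)) ⁻¹' ({t} ×ˢ {u})) := by
        unfold cexp
        congr 1
        refine setIntegral_congr_fun hBm fun ω hω => ?_
        obtain ⟨hTω, hUω⟩ : T ω = t ∧ U ω = u := by simpa using hω
        simp only [realized_potentials, hTω, hUω]
    _ = _ := cexp_preimage_eq_integral_of_indepFun_s10
        ((hunconf u).comp (measurable_realized t) measurable_id)
        (integrable_realized_potentials hTtil hYpo hC t u).aestronglyMeasurable
        (hT.prodMk hU) ((measurableSet_singleton t).prod (measurableSet_singleton u)) hpos.ne'

theorem reducedForm_mul_measure_eq_setIntegral [IsFiniteMeasure μ] [MeasurableSpace 𝒰]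
    [MeasurableSingletonClass 𝒰] (hT : Measurable T) (hU : Measurable U)
    (hTtil : ∀ t u, Measurable (Ttil t u)) (hYpo : ∀ t u, Measurable (Ypo t u))
    (hC : ∀ t u ω, |Ypo t u ω| ≤ C)
    (hunconf : ∀ u, IndepFun (potentials Ttil Ypo u) (fun ω => (T ω, U ω)) μ)
    (hmono : ∀ u ω, Ttil false u ω ≤ Ttil true u ω)
    (hpos : ∀ t u, 0 < μ {ω | U ω = u} → 0 < μ ({ω | T ω = t} ∩ {ω | U ω = u}))
    {u : 𝒰} (hu : 0 < μ {ω | U ω = u}) :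
    (cexp μ (fun ω => Ypo (Ttil (T ω) (U ω) ω) (U ω) ω) ({ω | T ω = true} ∩ {ω | U ω = u})
        - cexp μ (fun ω => Ypo (Ttil (T ω) (U ω) ω) (U ω) ω)
            ({ω | T ω = false} ∩ {ω | U ω = u})) * μ.real {ω | U ω = u}
      = ∫ ω in U ⁻¹' {u}, {ω | Ttil true (U ω) ω = true ∧ Ttil false (U ω) ω = false}.indicator
          (fun ω => Ypo true (U ω) ω - Ypo false (U ω) ω) ω ∂μ := by
  have hind : IndepFun (fun ω => complierEffect (potentials Ttil Ypo u ω)) U μ :=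
    (hunconf u).comp measurable_complierEffect measurable_snd
  calc _ = (∫ ω, complierEffect (potentials Ttil Ypo u ω) ∂μ) * μ.real (U ⁻¹' {u}) := by
        rw [cexp_observed_eq_integral_realized hT hU hTtil hYpo hC hunconf (hpos true u hu),
          cexp_observed_eq_integral_realized hT hU hTtil hYpo hC hunconf (hpos false u hu),
          ← integral_sub (integrable_realized_potentials hTtil hYpo hC true u)
            (integrable_realized_potentials hTtil hYpo hC false u)]
        congr 1
        exact integral_congr_ae (ae_of_all _ fun ω => realized_sub_realized (hmono u ω))
    _ = ∫ ω in U ⁻¹' {u}, complierEffect (potentials Ttil Ypo u ω) ∂μ :=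
        (hind.setIntegral_preimage_eq_mul
          (measurable_complierEffect.comp (measurable_potentials hTtil hYpo u)).aestronglyMeasurable
          hU (measurableSet_singleton u)).symm
    _ = _ := by
        refine setIntegral_congr_fun (hU (measurableSet_singleton u)) fun ω hω => ?_
        obtain rfl : U ω = u := hω
        rw [Set.indicator_apply]
        exact if_congr Iff.rfl rfl rfl

theorem tsum_reducedForm_eq_setIntegral_compliers [IsFiniteMeasure μ] [Fintype 𝒰]
    [MeasurableSpace 𝒰] [MeasurableSingletonClass 𝒰] (hT : Measurable T) (hU : Measurable U)
    (hTtil : ∀ t u, Measurable (Ttil t u)) (hYpo : ∀ t u, Measurable (Ypo t u))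
    (hC : ∀ t u ω, |Ypo t u ω| ≤ C)
    (hunconf : ∀ u, IndepFun (potentials Ttil Ypo u) (fun ω => (T ω, U ω)) μ)
    (hmono : ∀ u ω, Ttil false u ω ≤ Ttil true u ω)
    (hpos : ∀ t u, 0 < μ {ω | U ω = u} → 0 < μ ({ω | T ω = t} ∩ {ω | U ω = u})) :
    ∑' u : {u : 𝒰 // 0 < μ {ω | U ω = u}},
        (cexp μ (fun ω => Ypo (Ttil (T ω) (U ω) ω) (U ω) ω)
            ({ω | T ω = true} ∩ {ω | U ω = u.1})
          - cexp μ (fun ω => Ypo (Ttil (T ω) (U ω) ω) (U ω) ω)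
            ({ω | T ω = false} ∩ {ω | U ω = u.1}))
        * (μ {ω | U ω = u.1}).toReal
      = ∫ ω in {ω | Ttil true (U ω) ω = true ∧ Ttil false (U ω) ω = false},
          Ypo true (U ω) ω - Ypo false (U ω) ω ∂μ := by
  set compliers := {ω | Ttil true (U ω) ω = true ∧ Ttil false (U ω) ω = false}
  set g := compliers.indicator fun ω => Ypo true (U ω) ω - Ypo false (U ω) ω
  have hcompliers : MeasurableSet compliers :=
    (measurable_apply_index hU (hTtil true) (measurableSet_singleton true)).inter
      (measurable_apply_index hU (hTtil false) (measurableSet_singleton false))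
  have hg : Integrable g μ := by
    refine (Integrable.of_bound ((measurable_apply_index hU (hYpo true)).sub
      (measurable_apply_index hU (hYpo false))).aestronglyMeasurable (C + C)
      (ae_of_all _ fun ω => ?_)).indicator hcompliers
    exact (norm_sub_le _ _).trans (add_le_add (hC _ _ ω) (hC _ _ ω))
  have hsupport : Function.support (fun u => ∫ ω in U ⁻¹' {u}, g ω ∂μ)
      ⊆ {u | 0 < μ {ω | U ω = u}} :=
    fun u hu => pos_iff_ne_zero.2 fun h0 => hu (setIntegral_measure_zero g h0)
  calc _ = ∑' u : {u : 𝒰 // 0 < μ {ω | U ω = u}}, ∫ ω in U ⁻¹' {u.1}, g ω ∂μ :=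
        tsum_congr fun u =>
          reducedForm_mul_measure_eq_setIntegral hT hU hTtil hYpo hC hunconf hmono hpos u.2
    _ = ∑ u, ∫ ω in U ⁻¹' {u}, g ω ∂μ :=
        (tsum_subtype_eq_of_support_subset hsupport).trans (tsum_fintype _)
    _ = ∫ ω in ⋃ u, U ⁻¹' {u}, g ω ∂μ :=
        (integral_iUnion_fintype (fun u => hU (measurableSet_singleton u))
          (pairwise_disjoint_fiber U) fun _ => hg.integrableOn).symm
    _ = ∫ ω in compliers, Ypo true (U ω) ω - Ypo false (U ω) ω ∂μ := by
        rw [Set.iUnion_preimage_singleton_eq_univ, setIntegral_univ,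
          integral_indicator hcompliers]

theorem measure_compliers_pos [IsProbabilityMeasure μ] [Countable 𝒰] [MeasurableSpace 𝒰]
    [MeasurableSingletonClass 𝒰]
    (hunconf : ∀ u, IndepFun (potentials Ttil Ypo u) (fun ω => (T ω, U ω)) μ)
    (hrel : ∀ u, 0 < μ {ω | U ω = u} →
      μ {ω | Ttil false u ω = true} < μ {ω | Ttil true u ω = true}) :
    0 < μ {ω | Ttil true (U ω) ω = true ∧ Ttil false (U ω) ω = false} := by
  obtain ⟨u, hu⟩ : ∃ u, 0 < μ (U ⁻¹' {u}) := exists_measure_pos_of_not_measure_iUnion_null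
    (by simp [Set.iUnion_preimage_singleton_eq_univ])
  have hind : IndepFun (potentials Ttil Ypo u) U μ := (hunconf u).comp measurable_id measurable_snd
  calc 0 < μ {ω | Ttil true u ω = true ∧ Ttil false u ω = false} * μ (U ⁻¹' {u}) :=
        ENNReal.mul_pos (measure_setOf_and_eq_false_pos (hrel u hu)).ne' hu.ne'
    _ = μ (potentials Ttil Ypo u ⁻¹' {p | p.2.2.2 = true ∧ p.2.2.1 = false} ∩ U ⁻¹' {u}) :=
        (hind.measure_inter_preimage_eq_mul {p | p.2.2.2 = true ∧ p.2.2.1 = false} {u}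
          (measurableSet_setOfPred.2 (by fun_prop))
          (measurableSet_singleton u)).symm
    _ ≤ _ := measure_mono fun ω ⟨hω, hUω⟩ => by
        obtain rfl : U ω = u := hUω
        exact hω

end Setup

end IV

/-- Theorem 3 (nonparametric identification of the local average treatment effect):
in the IV setup with `𝒰` finite, under positivity and strict relevance at every
point of the support of `U`, the probability of being a complier is positive, the
denominator is positive, and the LATE among compliers equals the ratio of the
averaged reduced-form and first-stage differences. -/
theorem late_identification
    {Ω 𝒰 : Type*} [MeasurableSpace Ω] (μ : Measure Ω) [IsProbabilityMeasure μ]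
    [Fintype 𝒰] [MeasurableSpace 𝒰] [MeasurableSingletonClass 𝒰]
    (T : Ω → Bool) (U : Ω → 𝒰)
    (Ttil : Bool → 𝒰 → Ω → Bool) (Ypo : Bool → 𝒰 → Ω → ℝ)
    (Tperc : Ω → Bool) (Y : Ω → ℝ)
    (hT : Measurable T) (hU : Measurable U)
    (hTtil : ∀ (t : Bool) (u : 𝒰), Measurable (Ttil t u))
    (hYpo : ∀ (t : Bool) (u : 𝒰), Measurable (Ypo t u))
    (hbdd : ∃ C : ℝ, ∀ (t : Bool) (u : 𝒰) (ω : Ω), |Ypo t u ω| ≤ C)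
    (hTperc : ∀ ω, Tperc ω = Ttil (T ω) (U ω) ω)
    (hYobs : ∀ ω, Y ω = Ypo (Tperc ω) (U ω) ω)
    (hunconf : ∀ u : 𝒰,
      IndepFun (fun ω => (Ypo false u ω, Ypo true u ω, Ttil false u ω, Ttil true u ω))
        (fun ω => (T ω, U ω)) μ)
    (hmono : ∀ (u : 𝒰) (ω : Ω), Ttil false u ω ≤ Ttil true u ω)
    (hpos : ∀ (t : Bool) (u : 𝒰), 0 < μ {ω | U ω = u} →
      0 < μ ({ω | T ω = t} ∩ {ω | U ω = u}))
    (hrel : ∀ u : 𝒰, 0 < μ {ω | U ω = u} →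
      μ {ω | Ttil false u ω = true} < μ {ω | Ttil true u ω = true}) :
    0 < μ {ω | Ttil true (U ω) ω = true ∧ Ttil false (U ω) ω = false} ∧
    0 < ∑' u : {u : 𝒰 // 0 < μ {ω | U ω = u}},
          (cexp μ (fun ω => if Tperc ω = true then (1 : ℝ) else 0)
              ({ω | T ω = true} ∩ {ω | U ω = u.1})
            - cexp μ (fun ω => if Tperc ω = true then (1 : ℝ) else 0)
                ({ω | T ω = false} ∩ {ω | U ω = u.1}))
          * (μ {ω | U ω = u.1}).toReal ∧
    cexp μ (fun ω => Ypo true (U ω) ω - Ypo false (U ω) ω)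
        {ω | Ttil true (U ω) ω = true ∧ Ttil false (U ω) ω = false}
      = (∑' u : {u : 𝒰 // 0 < μ {ω | U ω = u}},
            (cexp μ Y ({ω | T ω = true} ∩ {ω | U ω = u.1})
              - cexp μ Y ({ω | T ω = false} ∩ {ω | U ω = u.1}))
            * (μ {ω | U ω = u.1}).toReal)
        / (∑' u : {u : 𝒰 // 0 < μ {ω | U ω = u}},
            (cexp μ (fun ω => if Tperc ω = true then (1 : ℝ) else 0)
                ({ω | T ω = true} ∩ {ω | U ω = u.1})
              - cexp μ (fun ω => if Tperc ω = true then (1 : ℝ) else 0)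
                  ({ω | T ω = false} ∩ {ω | U ω = u.1}))
            * (μ {ω | U ω = u.1}).toReal) := by
  obtain ⟨C, hC⟩ := hbdd
  set compliers := {ω | Ttil true (U ω) ω = true ∧ Ttil false (U ω) ω = false}
  let D : Bool → 𝒰 → Ω → ℝ := fun b _ _ => if b = true then 1 else 0
  have hY : Y = fun ω => Ypo (Ttil (T ω) (U ω) ω) (U ω) ω := funext fun ω => by
    rw [hYobs, hTperc]
  have hTperc' : (fun ω => if Tperc ω = true then (1 : ℝ) else 0)
      = fun ω => D (Ttil (T ω) (U ω) ω) (U ω) ω := funext fun ω => by rw [hTperc]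
  have hunconfD : ∀ u, IndepFun (IV.potentials Ttil D u) (fun ω => (T ω, U ω)) μ := fun u =>
    (hunconf u).comp (φ := fun p : ℝ × ℝ × Bool × Bool => ((0 : ℝ), (1 : ℝ), p.2.2))
      (by fun_prop) measurable_id
  have hden := IV.tsum_reducedForm_eq_setIntegral_compliers hT hU hTtil
    (fun _ _ => measurable_const) (C := 1) (fun b _ _ => by cases b <;> simp) hunconfD
    hmono hpos
  rw [← hTperc'] at hden
  have hpos_compliers : 0 < μ compliers := IV.measure_compliers_pos hunconf hrel
  simp only [if_true, Bool.false_eq_true, if_false, sub_zero, setIntegral_const, smul_eq_mul,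
    mul_one] at hden
  refine ⟨hpos_compliers, ?_, ?_⟩
  · rw [hden]
    exact ENNReal.toReal_pos hpos_compliers.ne' (measure_ne_top μ _)
  rw [hden, hY, IV.tsum_reducedForm_eq_setIntegral_compliers hT hU hTtil hYpo hC hunconf hmono
    hpos]
  rfl
end
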